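/- Let p be an integer with 1 ≤ p ≤ n/2 and let θ ∈ ℝ. If the curvature operator of the second kind satisfies R̊ ∈ C((n−1)p/2, θ), then for every orthonormal basis {e_1,…,e_n} of V one has Σ_{i=1}^p Ric(e_i,e_i) ≥ ((n−1)p/(n−p+2))·(1 − (n−p+1)θ)·λ̄. -/

import Mathlib

open scoped RealInnerProductSpace

noncomputable section

/-- The partial sum `λ₁ + ⋯ + λ_a` of the (sorted) values of `lam`, for a real index
`a`, i.e. `λ₁ + ⋯ + λ_⌊a⌋ + (a - ⌊a⌋)·λ_{⌊a⌋+1}`. -/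
def psum {N : ℕ} (lam : Fin N → ℝ) (a : ℝ) : ℝ :=
  (∑ i : Fin N, if (i : ℕ) < ⌊a⌋₊ then lam i else 0) +
    (a - (⌊a⌋₊ : ℝ)) * (if h : ⌊a⌋₊ < N then lam ⟨⌊a⌋₊, h⟩ else 0)

/-- The average of the values of `lam`. -/
def lamBar {N : ℕ} (lam : Fin N → ℝ) : ℝ := (∑ i, lam i) / (N : ℝ)

/-- The cone condition `C(a, θ)`: `a⁻¹(λ₁ + ⋯ + λ_a) ≥ -θ·λ̄`. -/
def inC {N : ℕ} (lam : Fin N → ℝ) (a θ : ℝ) : Prop :=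
  -θ * lamBar lam ≤ a⁻¹ * psum lam a

/-- The open cone condition `C̊(a, θ)`: `a⁻¹(λ₁ + ⋯ + λ_a) > -θ·λ̄`. -/
def inCint {N : ℕ} (lam : Fin N → ℝ) (a θ : ℝ) : Prop :=
  -θ * lamBar lam < a⁻¹ * psum lam a

variable {V : Type*} [NormedAddCommGroup V] [InnerProductSpace ℝ V]

/-- A quadrilinear form on `V`. -/
abbrev CurvMap (V : Type*) [NormedAddCommGroup V] [InnerProductSpace ℝ V] :=
  V →ₗ[ℝ] V →ₗ[ℝ] V →ₗ[ℝ] V →ₗ[ℝ] ℝ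

/-- `R` is an algebraic curvature tensor. -/
structure IsAlgCurv (R : CurvMap V) : Prop where
  antisymm : ∀ x y z w : V, R x y z w = - R y x z w
  pairSymm : ∀ x y z w : V, R x y z w = R z w x y
  bianchi : ∀ x y z w : V, R x y z w + R y z x w + R z x y w = 0

/-- The scalar curvature `S = Σ_{i,j} R_{ijij}` (w.r.t. the orthonormal basis `e`). -/
def scal {n : ℕ} (R : CurvMap V) (e : Fin n → V) : ℝ :=
  ∑ i, ∑ j, R (e i) (e j) (e i) (e j)

/-- The Ricci tensor `Ric(x,y) = Σ_i R(x, e_i, y, e_i)`. -/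
def ric {n : ℕ} (R : CurvMap V) (e : Fin n → V) (x y : V) : ℝ :=
  ∑ i, R x (e i) y (e i)

/-- The bilinear form `R̊(φ,ψ) = Σ_{i,j,k,l} R_{iklj} φ_{kl} ψ_{ij}` of the curvature
operator of the second kind, acting on components of two-tensors in the
orthonormal basis `e`. -/
def sok {n : ℕ} (R : CurvMap V) (e : Fin n → V) (φ ψ : Fin n → Fin n → ℝ) : ℝ :=
  ∑ i, ∑ j, ∑ k, ∑ l, R (e i) (e k) (e l) (e j) * φ k l * ψ i j

/-- The inner product `⟨φ,ψ⟩ = Σ_{i,j} φ_{ij} ψ_{ij}` on (components of) two-tensors. -/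
def tip {n : ℕ} (φ ψ : Fin n → Fin n → ℝ) : ℝ := ∑ i, ∑ j, φ i j * ψ i j

/-- `φ` is (the component matrix of) a symmetric traceless two-tensor. -/
def IsSymTr {n : ℕ} (φ : Fin n → Fin n → ℝ) : Prop :=
  (∀ i j, φ i j = φ j i) ∧ (∑ i, φ i i) = 0

/-- `lam` and `Φ` are the increasingly sorted eigenvalues, and corresponding
orthonormal eigentensors, of the curvature operator of the second kind of `R`
(expressed in components w.r.t. the orthonormal basis `e`). -/
def IsEigenSystem {n N : ℕ} (R : CurvMap V) (e : Fin n → V) (lam : Fin N → ℝ)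
    (Φ : Fin N → Fin n → Fin n → ℝ) : Prop :=
  Monotone lam ∧ (∀ β, IsSymTr (Φ β)) ∧
    (∀ β γ, tip (Φ β) (Φ γ) = if β = γ then 1 else 0) ∧
    (∀ β (ψ : Fin n → Fin n → ℝ), IsSymTr ψ → sok R e (Φ β) ψ = lam β * tip (Φ β) ψ)

/-- `R` has nonnegative isotropic curvature. -/
def NonnegIsotropic (R : CurvMap V) : Prop :=
  ∀ v : Fin 4 → V, Orthonormal ℝ v →
    0 ≤ R (v 0) (v 2) (v 0) (v 2) + R (v 0) (v 3) (v 0) (v 3) +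
        R (v 1) (v 2) (v 1) (v 2) + R (v 1) (v 3) (v 1) (v 3) -
        2 * R (v 0) (v 1) (v 2) (v 3)

/-- `R` has positive isotropic curvature. -/
def PosIsotropic (R : CurvMap V) : Prop :=
  ∀ v : Fin 4 → V, Orthonormal ℝ v →
    0 < R (v 0) (v 2) (v 0) (v 2) + R (v 0) (v 3) (v 0) (v 3) +
        R (v 1) (v 2) (v 1) (v 2) + R (v 1) (v 3) (v 1) (v 3) -
        2 * R (v 0) (v 1) (v 2) (v 3)


namespace StmtAux
open Finset Matrix

lemma card_lt_filter {K k : ℕ} (h : k < K) :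
    (Finset.univ.filter fun β : Fin K => (β : ℕ) < k).card = k := by
  have h1 : (Finset.univ.filter fun β : Fin K => (β : ℕ) < k) = Finset.Iio (⟨k, h⟩ : Fin K) := by
    ext β; simp [Fin.lt_def]
  rw [h1, Fin.card_Iio]

lemma sum_ind {K k : ℕ} (h : k < K) :
    ∑ β : Fin K, (if (β : ℕ) < k then (1:ℝ) else 0) = k := by
  rw [Finset.sum_boole, card_lt_filter h]

lemma bathtub {N : ℕ} (lam : Fin N → ℝ) (hmono : Monotone lam)
    (w : Fin N → ℝ) (C a : ℝ) (hCpos : 0 < C) (hw0 : ∀ β, 0 ≤ w β)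
    (hwC : ∀ β, w β ≤ C) (hsum : ∑ β, w β = C * a) (haN : a < N) :
    C * psum lam a ≤ ∑ β, w β * lam β := by
  have ha0 : 0 ≤ a := by
    have h0 : 0 ≤ ∑ β, w β := Finset.sum_nonneg fun β _ => hw0 β
    nlinarith
  have hma : ((⌊a⌋₊ : ℕ) : ℝ) ≤ a := Nat.floor_le ha0
  have hmN : ⌊a⌋₊ < N := by
    have : ((⌊a⌋₊ : ℕ) : ℝ) < (N : ℝ) := lt_of_le_of_lt hma haN
    exact_mod_cast this
  set m := ⌊a⌋₊ with hm
  set μ := lam ⟨m, hmN⟩ with hmu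
  have key : ∀ β : Fin N,
      (if (β:ℕ) < m then C * lam β else 0) + (w β - (if (β:ℕ) < m then C else 0)) * μ
        ≤ w β * lam β := by
    intro β
    by_cases hb : (β:ℕ) < m
    · have h1 : lam β ≤ μ := hmono (by rw [Fin.le_def]; exact Nat.le_of_lt hb)
      simp only [if_pos hb]
      nlinarith [hwC β]
    · have h1 : μ ≤ lam β := hmono (by rw [Fin.le_def]; exact Nat.le_of_not_lt hb)
      simp only [if_neg hb]
      nlinarith [hw0 β]
  have hsum2 := Finset.sum_le_sum (fun β (_ : β ∈ Finset.univ) => key β)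
  have eA : ∑ β : Fin N, (if (β:ℕ) < m then C * lam β else 0)
      = C * ∑ β : Fin N, (if (β:ℕ) < m then lam β else 0) := by
    rw [Finset.mul_sum]
    exact Finset.sum_congr rfl fun β _ => by split <;> simp
  have eC : ∑ β : Fin N, (if (β:ℕ) < m then C else 0) = C * m := by
    have h1 : ∀ β : Fin N, (if (β:ℕ) < m then C else 0) = C * (if (β:ℕ) < m then (1:ℝ) else 0) := by
      intro β; split <;> simp
    rw [Finset.sum_congr rfl fun β _ => h1 β, ← Finset.mul_sum, sum_ind hmN]
  have eB : ∑ β : Fin N, (w β - (if (β:ℕ) < m then C else 0)) * μ = (C * a - C * m) * μ := by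
    rw [← Finset.sum_mul, Finset.sum_sub_distrib, hsum, eC]
  rw [Finset.sum_add_distrib, eA, eB] at hsum2
  have epsum : psum lam a = (∑ β : Fin N, if (β:ℕ) < m then lam β else 0) + (a - m) * μ := by
    unfold psum
    rw [← hm, dif_pos hmN, ← hmu]
  rw [epsum]
  ring_nf
  ring_nf at hsum2
  linarith



variable {n : ℕ}

lemma tip_add_left (φ φ' ψ : Fin n → Fin n → ℝ) :
    tip (φ + φ') ψ = tip φ ψ + tip φ' ψ := by
  simp [tip, add_mul, Finset.sum_add_distrib]

lemma tip_smul_left (c : ℝ) (φ ψ : Fin n → Fin n → ℝ) :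
    tip (c • φ) ψ = c * tip φ ψ := by
  simp [tip, Finset.mul_sum, mul_assoc]

lemma tip_comm (φ ψ : Fin n → Fin n → ℝ) : tip φ ψ = tip ψ φ := by
  unfold tip
  exact Finset.sum_congr rfl fun _ _ => Finset.sum_congr rfl fun _ _ => mul_comm _ _

lemma tip_sum_left {ι : Type*} (s : Finset ι) (g : ι → Fin n → Fin n → ℝ)
    (ψ : Fin n → Fin n → ℝ) :
    tip (∑ a ∈ s, g a) ψ = ∑ a ∈ s, tip (g a) ψ := by
  induction s using Finset.cons_induction with
  | empty => simp [tip]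
  | cons a s ha ih => rw [Finset.sum_cons, Finset.sum_cons, tip_add_left, ih]


lemma tip_add_right (φ ψ ψ' : Fin n → Fin n → ℝ) :
    tip φ (ψ + ψ') = tip φ ψ + tip φ ψ' := by
  rw [tip_comm, tip_add_left, tip_comm ψ φ, tip_comm ψ' φ]

lemma tip_smul_right (c : ℝ) (φ ψ : Fin n → Fin n → ℝ) :
    tip φ (c • ψ) = c * tip φ ψ := by
  rw [tip_comm, tip_smul_left, tip_comm ψ φ]

lemma tip_sum_right {ι : Type*} (s : Finset ι) (φ : Fin n → Fin n → ℝ)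
    (g : ι → Fin n → Fin n → ℝ) :
    tip φ (∑ a ∈ s, g a) = ∑ a ∈ s, tip φ (g a) := by
  rw [tip_comm, tip_sum_left]
  exact Finset.sum_congr rfl fun a _ => tip_comm _ _

def symTr (n : ℕ) : Submodule ℝ (Fin n → Fin n → ℝ) where
  carrier := {φ | IsSymTr φ}
  add_mem' := by
    rintro a b ⟨hs, ht⟩ ⟨hs', ht'⟩
    exact ⟨fun i j => by simp [Pi.add_apply, hs i j, hs' i j],
      by simp [Pi.add_apply, Finset.sum_add_distrib, ht, ht']⟩
  zero_mem' := ⟨fun i j => rfl, by simp⟩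
  smul_mem' := by
    rintro c a ⟨hs, ht⟩
    refine ⟨fun i j => by simp [hs i j], ?_⟩
    simp [← Finset.mul_sum, ht]

lemma two_mul_card_lt_pairs (n : ℕ) :
    2 * Fintype.card {q : Fin n × Fin n // q.1 < q.2} = n * (n - 1) := by
  classical
  rw [Fintype.card_subtype, Finset.card_filter, Fintype.sum_prod_type]
  have h1 : ∀ i : Fin n, (∑ j : Fin n, if (i, j).1 < (i, j).2 then 1 else 0) = n - 1 - (i : ℕ) := by
    intro i
    rw [← Finset.card_filter]
    have : (Finset.univ.filter fun j : Fin n => i < j) = Finset.Ioi i := by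
      ext j; simp
    rw [this, Fin.card_Ioi]
  rw [Finset.sum_congr rfl fun i _ => h1 i]
  rw [Fin.sum_univ_eq_sum_range (fun k => n - 1 - k) n, Finset.sum_range_reflect (fun j => j) n]
  rw [mul_comm]
  exact Finset.sum_range_id_mul_two n

lemma finrank_symTr_le {n Nn : ℕ} (hn : 1 ≤ n) (hN : 2 * Nn = (n - 1) * (n + 2)) :
    Module.finrank ℝ (symTr n) ≤ Nn := by
  classical
  set z : Fin n := ⟨0, hn⟩ with hz
  let F : symTr n →ₗ[ℝ]
      ({q : Fin n × Fin n // q.1 < q.2} → ℝ) × ({i : Fin n // ¬ (i = z)} → ℝ) :=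
    { toFun := fun φ => (fun q => φ.1 q.1.1 q.1.2, fun i => φ.1 i.1 i.1)
      map_add' := fun a b => rfl
      map_smul' := fun c a => rfl }
  have hinj : Function.Injective F := by
    rw [injective_iff_map_eq_zero]
    intro φ hφ
    obtain ⟨hsym, htr⟩ := φ.2
    have h1 : ∀ i j : Fin n, i < j → φ.1 i j = 0 := by
      intro i j hij
      exact congrFun (congrArg Prod.fst hφ) ⟨(i, j), hij⟩
    have h2 : ∀ i : Fin n, ¬(i = z) → φ.1 i i = 0 := by
      intro i hi
      exact congrFun (congrArg Prod.snd hφ) ⟨i, hi⟩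
    have hzz : φ.1 z z = 0 := by
      have hs : ∑ i, φ.1 i i = φ.1 z z :=
        Finset.sum_eq_single z (fun b _ hb => h2 b hb) (by simp)
      rw [htr] at hs; exact hs.symm
    apply Subtype.ext; funext i j
    rcases lt_trichotomy i j with h | h | h
    · exact h1 i j h
    · subst h
      by_cases hi : i = z
      · rw [hi]; exact hzz
      · exact h2 i hi
    · rw [hsym i j]; exact h1 j i h
  have hle := LinearMap.finrank_le_finrank_of_injective hinj
  have hP : Module.finrank ℝ
      (({q : Fin n × Fin n // q.1 < q.2} → ℝ) × ({i : Fin n // ¬ (i = z)} → ℝ))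
      = Fintype.card {q : Fin n × Fin n // q.1 < q.2} + (n - 1) := by
    rw [Module.finrank_prod, Module.finrank_pi, Module.finrank_pi]
    congr 1
    rw [Fintype.card_subtype_compl, Fintype.card_subtype_eq, Fintype.card_fin]
  rw [hP] at hle
  have h2 := two_mul_card_lt_pairs n
  set c := Fintype.card {q : Fin n × Fin n // q.1 < q.2} with hc
  have heq : 2 * (c + (n - 1)) = 2 * Nn := by
    obtain ⟨k, rfl⟩ : ∃ k, n = k + 1 := ⟨n - 1, by omega⟩
    have e1 : k + 1 - 1 = k := by omega
    rw [e1]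
    rw [e1] at h2
    calc 2 * (c + k) = 2 * c + 2 * k := by ring
      _ = (k + 1) * k + 2 * k := by rw [h2]
      _ = (k + 1 - 1) * (k + 1 + 2) := by rw [e1]; ring
      _ = 2 * Nn := hN.symm
  omega

lemma expansion {n Nn : ℕ} (hn : 1 ≤ n) (hN : 2 * Nn = (n - 1) * (n + 2))
    (Φ : Fin Nn → Fin n → Fin n → ℝ)
    (hsym : ∀ β, IsSymTr (Φ β))
    (horth : ∀ β γ, tip (Φ β) (Φ γ) = if β = γ then 1 else 0)
    (ψ : Fin n → Fin n → ℝ) (hψ : IsSymTr ψ) :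
    ψ = ∑ β, tip (Φ β) ψ • Φ β := by
  classical
  have htipc : ∀ (c : Fin Nn → ℝ) γ, tip (Φ γ) (∑ β, c β • Φ β) = c γ := by
    intro c γ
    rw [tip_comm, tip_sum_left]
    have : ∀ β, tip (c β • Φ β) (Φ γ) = c β * (if β = γ then 1 else 0) := by
      intro β; rw [tip_smul_left, horth]
    rw [Finset.sum_congr rfl fun β _ => this β]
    simp
  have hli : LinearIndependent ℝ Φ := by
    rw [Fintype.linearIndependent_iff]
    intro g hg γ
    have h1 := htipc g γ
    rw [hg] at h1
    simpa [tip] using h1.symm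
  have hspan : Submodule.span ℝ (Set.range Φ) = symTr n := by
    apply Submodule.eq_of_le_of_finrank_le
    · rw [Submodule.span_le]
      rintro _ ⟨β, rfl⟩
      exact hsym β
    · rw [finrank_span_eq_card hli, Fintype.card_fin]
      exact finrank_symTr_le hn hN
  have hmem : ψ ∈ Submodule.span ℝ (Set.range Φ) := by
    rw [hspan]; exact hψ
  obtain ⟨c, hc⟩ := (Submodule.mem_span_range_iff_exists_fun ℝ).mp hmem
  have hcoef : ∀ γ, c γ = tip (Φ γ) ψ := by
    intro γ; rw [← hc, htipc]
  rw [← hc]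
  exact Finset.sum_congr rfl fun β _ => by rw [htipc c β]



variable {n : ℕ}

lemma sok_add_left (R : CurvMap V) (e : Fin n → V) (φ φ' ψ : Fin n → Fin n → ℝ) :
    sok R e (φ + φ') ψ = sok R e φ ψ + sok R e φ' ψ := by
  simp [sok, Pi.add_apply, mul_add, add_mul, Finset.sum_add_distrib]

lemma sok_smul_left (R : CurvMap V) (e : Fin n → V) (c : ℝ) (φ ψ : Fin n → Fin n → ℝ) :
    sok R e (c • φ) ψ = c * sok R e φ ψ := by
  simp only [sok, Pi.smul_apply, smul_eq_mul, Finset.mul_sum]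
  refine Finset.sum_congr rfl fun i _ => Finset.sum_congr rfl fun j _ =>
    Finset.sum_congr rfl fun k _ => Finset.sum_congr rfl fun l _ => by ring

lemma sok_sum_left {ι : Type*} (R : CurvMap V) (e : Fin n → V) (s : Finset ι)
    (g : ι → Fin n → Fin n → ℝ) (ψ : Fin n → Fin n → ℝ) :
    sok R e (∑ a ∈ s, g a) ψ = ∑ a ∈ s, sok R e (g a) ψ := by
  induction s using Finset.cons_induction with
  | empty => simp [sok]
  | cons a s ha ih => rw [Finset.sum_cons, Finset.sum_cons, sok_add_left, ih]

lemma sok_add_right (R : CurvMap V) (e : Fin n → V) (φ ψ ψ' : Fin n → Fin n → ℝ) :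
    sok R e φ (ψ + ψ') = sok R e φ ψ + sok R e φ ψ' := by
  simp [sok, Pi.add_apply, mul_add, add_mul, Finset.sum_add_distrib]

lemma sok_smul_right (R : CurvMap V) (e : Fin n → V) (c : ℝ) (φ ψ : Fin n → Fin n → ℝ) :
    sok R e φ (c • ψ) = c * sok R e φ ψ := by
  simp only [sok, Pi.smul_apply, smul_eq_mul, Finset.mul_sum]
  refine Finset.sum_congr rfl fun i _ => Finset.sum_congr rfl fun j _ =>
    Finset.sum_congr rfl fun k _ => Finset.sum_congr rfl fun l _ => by ring

lemma sok_sum_right {ι : Type*} (R : CurvMap V) (e : Fin n → V) (s : Finset ι)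
    (φ : Fin n → Fin n → ℝ) (g : ι → Fin n → Fin n → ℝ) :
    sok R e φ (∑ a ∈ s, g a) = ∑ a ∈ s, sok R e φ (g a) := by
  induction s using Finset.cons_induction with
  | empty => simp [sok]
  | cons a s ha ih => rw [Finset.sum_cons, Finset.sum_cons, sok_add_right, ih]

def Tc {n : ℕ} (e : Fin n → V) (x y : V) : Fin n → Fin n → ℝ :=
  fun k l => ⟪x, e k⟫ * ⟪y, e l⟫

lemma tip_Tc (b : OrthonormalBasis (Fin n) ℝ V) (x y z w : V) :
    tip (Tc (⇑b) x y) (Tc (⇑b) z w) = ⟪x, z⟫ * ⟪y, w⟫ := by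
  have hp : ∀ u v : V, ∑ k, ⟪u, b k⟫ * ⟪v, b k⟫ = ⟪u, v⟫ := by
    intro u v
    simpa [real_inner_comm] using b.sum_inner_mul_inner u v
  unfold tip Tc
  rw [← hp x z, ← hp y w, Finset.sum_mul_sum]
  exact Finset.sum_congr rfl fun k _ => Finset.sum_congr rfl fun l _ => by ring

lemma sok_Tc (R : CurvMap V) (b : OrthonormalBasis (Fin n) ℝ V) (x y z w : V) :
    sok R (⇑b) (Tc (⇑b) x y) (Tc (⇑b) z w) = R z x y w := by
  have hr : ∀ u : V, ∑ k, ⟪u, b k⟫ • b k = u := by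
    intro u
    simpa [real_inner_comm] using b.sum_repr' u
  have h4 : ∀ u1 u2 u3 u4 : V,
      (∑ j, ⟪u4, b j⟫ * R u1 u2 u3 (b j)) = R u1 u2 u3 u4 := by
    intro u1 u2 u3 u4
    conv_rhs => rw [← hr u4]
    rw [map_sum]
    exact Finset.sum_congr rfl fun j _ => by rw [_root_.map_smul, smul_eq_mul]
  have h3 : ∀ u1 u2 u3 u4 : V,
      (∑ l, ⟪u3, b l⟫ * R u1 u2 (b l) u4) = R u1 u2 u3 u4 := by
    intro u1 u2 u3 u4
    conv_rhs => rw [← hr u3]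
    rw [map_sum, LinearMap.sum_apply]
    exact Finset.sum_congr rfl fun l _ => by
      rw [_root_.map_smul, LinearMap.smul_apply, smul_eq_mul]
  have h2 : ∀ u1 u2 u3 u4 : V,
      (∑ k, ⟪u2, b k⟫ * R u1 (b k) u3 u4) = R u1 u2 u3 u4 := by
    intro u1 u2 u3 u4
    conv_rhs => rw [← hr u2]
    rw [map_sum, LinearMap.sum_apply, LinearMap.sum_apply]
    exact Finset.sum_congr rfl fun k _ => by
      rw [_root_.map_smul, LinearMap.smul_apply, LinearMap.smul_apply, smul_eq_mul]
  have h1 : ∀ u1 u2 u3 u4 : V,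
      (∑ i, ⟪u1, b i⟫ * R (b i) u2 u3 u4) = R u1 u2 u3 u4 := by
    intro u1 u2 u3 u4
    conv_rhs => rw [← hr u1]
    rw [map_sum, LinearMap.sum_apply, LinearMap.sum_apply, LinearMap.sum_apply]
    exact Finset.sum_congr rfl fun i _ => by
      rw [_root_.map_smul, LinearMap.smul_apply, LinearMap.smul_apply, LinearMap.smul_apply,
        smul_eq_mul]
  have reorder : ∀ i : Fin n,
      (∑ j, ∑ k, ∑ l, R (b i) (b k) (b l) (b j) * (⟪x, b k⟫ * ⟪y, b l⟫) *
        (⟪z, b i⟫ * ⟪w, b j⟫))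
      = ∑ k, ∑ l, ∑ j, R (b i) (b k) (b l) (b j) * (⟪x, b k⟫ * ⟪y, b l⟫) *
        (⟪z, b i⟫ * ⟪w, b j⟫) := by
    intro i
    rw [Finset.sum_comm]
    exact Finset.sum_congr rfl fun k _ => Finset.sum_comm
  calc sok R (⇑b) (Tc (⇑b) x y) (Tc (⇑b) z w)
      = ∑ i, ⟪z, b i⟫ * (∑ k, ⟪x, b k⟫ * (∑ l, ⟪y, b l⟫ *
          (∑ j, ⟪w, b j⟫ * R (b i) (b k) (b l) (b j)))) := by
        unfold sok Tc
        rw [Finset.sum_congr rfl fun i _ => reorder i]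
        simp only [Finset.mul_sum]
        exact Finset.sum_congr rfl fun i _ => Finset.sum_congr rfl fun k _ =>
          Finset.sum_congr rfl fun l _ => Finset.sum_congr rfl fun j _ => by ring
    _ = ∑ i, ⟪z, b i⟫ * R (b i) x y w := by
        refine Finset.sum_congr rfl fun i _ => ?_
        congr 1
        calc (∑ k, ⟪x, b k⟫ * (∑ l, ⟪y, b l⟫ *
                (∑ j, ⟪w, b j⟫ * R (b i) (b k) (b l) (b j))))
            = ∑ k, ⟪x, b k⟫ * R (b i) (b k) y w := by
              refine Finset.sum_congr rfl fun k _ => ?_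
              congr 1
              calc (∑ l, ⟪y, b l⟫ * (∑ j, ⟪w, b j⟫ * R (b i) (b k) (b l) (b j)))
                  = ∑ l, ⟪y, b l⟫ * R (b i) (b k) (b l) w := by
                    refine Finset.sum_congr rfl fun l _ => ?_
                    congr 1
                    exact h4 _ _ _ w
                _ = R (b i) (b k) y w := h3 _ _ y w
          _ = R (b i) x y w := h2 _ x y w
    _ = R z x y w := h1 z x y w

lemma sq_sum_transform (a ψ : Fin n → Fin n → ℝ)
    (ha : ∀ k l, ∑ i, a i k * a i l = if k = l then (1:ℝ) else 0) :
    ∑ i, ∑ j, (∑ k, ∑ l, a i k * a j l * ψ k l) ^ 2 = ∑ k, ∑ l, (ψ k l) ^ 2 := by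
  classical
  set A : Matrix (Fin n) (Fin n) ℝ := Matrix.of a with hA
  set M : Matrix (Fin n) (Fin n) ℝ := Matrix.of ψ with hM
  have hAA : Aᵀ * A = 1 := by
    ext k l
    simp [Matrix.mul_apply, Matrix.transpose_apply, hA, Matrix.one_apply, ha k l]
  have key : ∀ B : Matrix (Fin n) (Fin n) ℝ,
      (∑ i, ∑ j, (B i j) ^ 2) = (B * Bᵀ).trace := by
    intro B
    simp [Matrix.trace, Matrix.diag, Matrix.mul_apply, sq]
  have hB : ∀ i j, (A * M * Aᵀ) i j = ∑ k, ∑ l, a i k * a j l * ψ k l := by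
    intro i j
    simp only [Matrix.mul_apply, Matrix.transpose_apply, hA, hM, Matrix.of_apply,
      Finset.sum_mul]
    rw [Finset.sum_comm]
    exact Finset.sum_congr rfl fun k _ => Finset.sum_congr rfl fun l _ => by ring
  calc ∑ i, ∑ j, (∑ k, ∑ l, a i k * a j l * ψ k l) ^ 2
      = ∑ i, ∑ j, ((A * M * Aᵀ) i j) ^ 2 := by
        exact Finset.sum_congr rfl fun i _ => Finset.sum_congr rfl fun j _ => by rw [hB]
    _ = ((A * M * Aᵀ) * (A * M * Aᵀ)ᵀ).trace := key _
    _ = (M * Mᵀ).trace := by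
        rw [Matrix.transpose_mul, Matrix.transpose_mul, Matrix.transpose_transpose]
        simp only [Matrix.mul_assoc]
        rw [← Matrix.mul_assoc Aᵀ A, hAA, Matrix.one_mul]
        rw [Matrix.trace_mul_comm]
        simp only [Matrix.mul_assoc]
        rw [hAA, Matrix.mul_one]
    _ = ∑ k, ∑ l, (ψ k l) ^ 2 := (key M).symm


end StmtAux

open Finset StmtAux

set_option maxHeartbeats 2000000 in
/-- Proposition 5.1: if `1 ≤ p ≤ n/2` and
`R̊ ∈ C((n−1)p/2, θ)`, then for every orthonormal basis `{e_i}` of `V`,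
`Σ_{i=1}^p Ric(e_i,e_i) ≥ ((n−1)p/(n−p+2))·(1 − (n−p+1)θ)·λ̄`. -/
theorem stmt_16 {V : Type*} [NormedAddCommGroup V] [InnerProductSpace ℝ V]
    [FiniteDimensional ℝ V]
    (n : ℕ) (hn : 3 ≤ n) (hdim : Module.finrank ℝ V = n)
    (e : Fin n → V) (he : Orthonormal ℝ e)
    (R : CurvMap V) (hR : IsAlgCurv R)
    (N : ℕ) (hN : 2 * N = (n - 1) * (n + 2))
    (lam : Fin N → ℝ) (Φ : Fin N → Fin n → Fin n → ℝ)
    (hE : IsEigenSystem R e lam Φ)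
    (p : ℕ) (hp1 : 1 ≤ p) (hp2 : 2 * p ≤ n)
    (θ : ℝ) (hC : inC lam (((n : ℝ) - 1) * (p : ℝ) / 2) θ) :
    ∀ f : Fin n → V, Orthonormal ℝ f →
      ((n : ℝ) - 1) * (p : ℝ) / ((n : ℝ) - (p : ℝ) + 2) *
          (1 - ((n : ℝ) - (p : ℝ) + 1) * θ) * lamBar lam ≤
        ∑ i : Fin n, if (i : ℕ) < p then ric R f (f i) (f i) else 0 := by
  classical
  intro f hf
  obtain ⟨hmono, hsymΦ, horth, heig⟩ := hE
  have hn1 : 1 ≤ n := by omega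
  have hpln : p < n := by omega
  have hnR : (3:ℝ) ≤ (n:ℝ) := by exact_mod_cast hn
  have hpR : (1:ℝ) ≤ (p:ℝ) := by exact_mod_cast hp1
  have hpnR : 2*(p:ℝ) ≤ (n:ℝ) := by exact_mod_cast hp2
  have hnne : (n:ℝ) ≠ 0 := by positivity
  -- orthonormal bases
  have hcard : Fintype.card (Fin n) = Module.finrank ℝ V := by
    rw [Fintype.card_fin, hdim]
  have : Nonempty (Fin n) := ⟨⟨0, by omega⟩⟩
  set be : OrthonormalBasis (Fin n) ℝ V :=
    (basisOfLinearIndependentOfCardEqFinrank he.linearIndependent hcard).toOrthonormalBasis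
      (by rwa [coe_basisOfLinearIndependentOfCardEqFinrank]) with hbe0
  have hbe : ⇑be = e := by
    rw [hbe0, Module.Basis.coe_toOrthonormalBasis, coe_basisOfLinearIndependentOfCardEqFinrank]
  set bf : OrthonormalBasis (Fin n) ℝ V :=
    (basisOfLinearIndependentOfCardEqFinrank hf.linearIndependent hcard).toOrthonormalBasis
      (by rwa [coe_basisOfLinearIndependentOfCardEqFinrank]) with hbf0
  have hbf : ⇑bf = f := by
    rw [hbf0, Module.Basis.coe_toOrthonormalBasis, coe_basisOfLinearIndependentOfCardEqFinrank]
  have sokTc : ∀ x y z w : V, sok R e (Tc e x y) (Tc e z w) = R z x y w := by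
    intro x y z w; rw [← hbe]; exact StmtAux.sok_Tc R be x y z w
  have tipTc : ∀ x y z w : V, tip (Tc e x y) (Tc e z w) = ⟪x, z⟫ * ⟪y, w⟫ := by
    intro x y z w; rw [← hbe]; exact StmtAux.tip_Tc be x y z w
  have hfo : ∀ i j, ⟪f i, f j⟫ = if i = j then (1:ℝ) else 0 := fun i j =>
    orthonormal_iff_ite.mp hf i j
  have heo : ∀ i j, ⟪e i, e j⟫ = if i = j then (1:ℝ) else 0 := fun i j =>
    orthonormal_iff_ite.mp he i j
  have hep : ∀ x y : V, (∑ k, ⟪x, e k⟫ * ⟪y, e k⟫) = ⟪x, y⟫ := by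
    intro x y
    rw [← hbe]
    simpa [real_inner_comm] using be.sum_inner_mul_inner x y
  -- curvature identities
  have hzero : ∀ x z w : V, R x x z w = 0 := by
    intro x z w
    have := hR.antisymm x x z w
    linarith
  have hanti2 : ∀ x y z w : V, R x y w z = - R x y z w := by
    intro x y z w
    rw [hR.pairSymm x y w z, hR.antisymm w z x y, hR.pairSymm z w x y]
  have hswap : ∀ x y z w : V, R y x w z = R x y z w := by
    intro x y z w
    rw [hR.antisymm y x w z, hanti2 x y w z]
  -- tensors
  set TT : Fin n → Fin n → (Fin n → Fin n → ℝ) := fun i j => Tc e (f i) (f j) with hTT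
  set G : Fin n → Fin n → ℝ := ∑ m, TT m m with hG
  have hTTval : ∀ i j k l, TT i j k l = ⟪f i, e k⟫ * ⟪f j, e l⟫ := by
    intro i j k l; rw [hTT]; rfl
  have hGdiag : ∀ k l, G k l = if k = l then (1:ℝ) else 0 := by
    intro k l
    have h1 : G k l = ∑ m, ⟪f m, e k⟫ * ⟪f m, e l⟫ := by
      rw [hG]; simp [hTT, StmtAux.Tc, Finset.sum_apply]
    have h2 : (∑ m, ⟪f m, e k⟫ * ⟪f m, e l⟫) = ∑ m, ⟪e k, f m⟫ * ⟪f m, e l⟫ :=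
      Finset.sum_congr rfl fun m _ => by rw [real_inner_comm (f m) (e k)]
    rw [h1, h2, ← hbf, bf.sum_inner_mul_inner (e k) (e l)]
    exact heo k l
  set O : Fin n → Fin n → (Fin n → Fin n → ℝ) := fun i j => TT i j + TT j i with hO
  set hdg : Fin n → (Fin n → Fin n → ℝ) := fun i => TT i i + (-(1/(n:ℝ))) • G with hhdg
  have hOval : ∀ i j k l, O i j k l = TT i j k l + TT j i k l := by
    intro i j k l; rw [hO]; rfl
  have hdval : ∀ i k l, hdg i k l = TT i i k l + (-(1/(n:ℝ))) * G k l := by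
    intro i k l; rw [hhdg]; rfl
  have hOsymtr : ∀ i j, i ≠ j → IsSymTr (O i j) := by
    intro i j hij
    constructor
    · intro k l
      rw [hOval, hOval, hTTval, hTTval, hTTval, hTTval]
      ring
    · have h1 : ∀ k, O i j k k = ⟪f i, e k⟫ * ⟪f j, e k⟫ + ⟪f j, e k⟫ * ⟪f i, e k⟫ := by
        intro k; rw [hOval, hTTval, hTTval]
      rw [Finset.sum_congr rfl fun k _ => h1 k, Finset.sum_add_distrib,
        hep (f i) (f j), hep (f j) (f i), hfo i j, hfo j i,
        if_neg hij, if_neg (Ne.symm hij)]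
      ring
  have hhdsymtr : ∀ i, IsSymTr (hdg i) := by
    intro i
    constructor
    · intro k l
      rw [hdval, hdval, hTTval, hTTval, hGdiag, hGdiag]
      by_cases h : k = l
      · subst h; ring
      · rw [if_neg h, if_neg (Ne.symm h)]; ring
    · have h1 : ∀ k, hdg i k k = ⟪f i, e k⟫ * ⟪f i, e k⟫ + (-(1/(n:ℝ))) * G k k := by
        intro k; rw [hdval, hTTval]
      rw [Finset.sum_congr rfl fun k _ => h1 k, Finset.sum_add_distrib, hep (f i) (f i),
        hfo i i, if_pos rfl]
      have h2 : (∑ k : Fin n, (-(1/(n:ℝ))) * G k k) = -1 := by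
        rw [← Finset.mul_sum]
        have h3 : ∀ k : Fin n, G k k = 1 := fun k => by rw [hGdiag]; simp
        rw [Finset.sum_congr rfl fun k _ => h3 k]
        simp [Finset.card_univ]
        field_simp
      rw [h2]; ring
  -- tip values
  have tipGany : ∀ ψ : Fin n → Fin n → ℝ, tip G ψ = ∑ k, ψ k k := by
    intro ψ
    unfold tip
    have h1 : ∀ k, (∑ l, G k l * ψ k l) = ψ k k := by
      intro k
      have h2 : ∀ l, G k l * ψ k l = if k = l then ψ k l else 0 := by
        intro l; rw [hGdiag]; by_cases h : k = l <;> simp [h]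
      rw [Finset.sum_congr rfl fun l _ => h2 l, Finset.sum_ite_eq]; simp
    exact Finset.sum_congr rfl fun k _ => h1 k
  have tipTTv : ∀ i j a b, tip (TT i j) (TT a b)
      = (if i = a then (1:ℝ) else 0) * (if j = b then (1:ℝ) else 0) := by
    intro i j a b
    rw [hTT, tipTc, hfo, hfo]
  have tipTTswap : ∀ i j (ψ : Fin n → Fin n → ℝ), (∀ k l, ψ k l = ψ l k) →
      tip (TT j i) ψ = tip (TT i j) ψ := by
    intro i j ψ hs
    unfold tip
    rw [Finset.sum_comm]
    refine Finset.sum_congr rfl fun k _ => Finset.sum_congr rfl fun l _ => ?_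
    rw [hTTval, hTTval, hs l k]
    ring
  have tipOψ : ∀ i j (ψ : Fin n → Fin n → ℝ), (∀ k l, ψ k l = ψ l k) →
      tip (O i j) ψ = 2 * tip (TT i j) ψ := by
    intro i j ψ hs
    rw [hO]
    rw [tip_add_left, tipTTswap i j ψ hs]
    ring
  have tiphdψ : ∀ i (ψ : Fin n → Fin n → ℝ), (∑ k, ψ k k) = 0 →
      tip (hdg i) ψ = tip (TT i i) ψ := by
    intro i ψ ht
    rw [hhdg]
    rw [tip_add_left, tip_smul_left, tipGany ψ, ht]
    ring
  have tipOO : ∀ i j, i ≠ j → tip (O i j) (O i j) = 2 := by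
    intro i j hij
    have hsym := (hOsymtr i j hij).1
    rw [tipOψ i j (O i j) hsym, hO]
    rw [tip_add_right, tipTTv i j i j, tipTTv i j j i,
      if_pos rfl, if_pos rfl, if_neg hij, if_neg (Ne.symm hij)]
    ring
  have tipTTG : ∀ i j, tip (TT i j) G = ⟪f i, f j⟫ := by
    intro i j
    rw [tip_comm, tipGany]
    rw [Finset.sum_congr rfl fun k (_ : k ∈ Finset.univ) => hTTval i j k k]
    exact hep (f i) (f j)
  have tiphdhd : ∀ i, tip (hdg i) (hdg i) = 1 - 1/(n:ℝ) := by
    intro i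
    rw [tiphdψ i (hdg i) (hhdsymtr i).2]
    rw [hhdg]
    rw [tip_add_right, tip_smul_right, tipTTv i i i i, tipTTG i i, hfo i i]
    simp
    ring
  -- expansion and spectral identities
  have hexp : ∀ ψ, IsSymTr ψ → ψ = ∑ β, tip (Φ β) ψ • Φ β := fun ψ hψ =>
    StmtAux.expansion hn1 hN Φ hsymΦ horth ψ hψ
  have parsevalW : ∀ h, IsSymTr h → (∑ β, (tip (Φ β) h)^2) = tip h h := by
    intro h hh
    have h1 : tip h h = ∑ β, tip (Φ β) h * tip (Φ β) h := by
      nth_rewrite 1 [hexp h hh]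
      rw [tip_sum_left]
      exact Finset.sum_congr rfl fun β _ => by rw [tip_smul_left]
    rw [h1]
    exact Finset.sum_congr rfl fun β _ => sq (tip (Φ β) h) ▸ by rw [sq]
  have eigsum : ∀ h, IsSymTr h → (∑ β, lam β * (tip (Φ β) h)^2) = sok R e h h := by
    intro h hh
    have h1 : sok R e h h = ∑ β, tip (Φ β) h * (lam β * tip (Φ β) h) := by
      nth_rewrite 1 [hexp h hh]
      rw [sok_sum_left]
      exact Finset.sum_congr rfl fun β _ => by rw [sok_smul_left, heig β h hh]
    rw [h1]
    exact Finset.sum_congr rfl fun β _ => by ring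
  -- sok values
  have sokTTv : ∀ i j a b, sok R e (TT i j) (TT a b) = R (f a) (f i) (f j) (f b) := by
    intro i j a b
    rw [hTT]
    exact sokTc (f i) (f j) (f a) (f b)
  have sokOO : ∀ i j, sok R e (O i j) (O i j) = 2 * R (f i) (f j) (f i) (f j) := by
    intro i j
    rw [hO]
    rw [sok_add_left, sok_add_right, sok_add_right, sokTTv i j i j, sokTTv j i i j,
      sokTTv i j j i, sokTTv j i j i]
    rw [hzero (f i) (f j) (f j), hzero (f j) (f i) (f i),
      hswap (f i) (f j) (f i) (f j)]
    ring
  have sokGTT : ∀ i, sok R e G (TT i i) = - ric R f (f i) (f i) := by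
    intro i
    rw [hG, sok_sum_left]
    have h1 : ∀ m, sok R e (TT m m) (TT i i) = - R (f i) (f m) (f i) (f m) := by
      intro m
      rw [sokTTv m m i i, hanti2 (f i) (f m) (f i) (f m)]
    rw [Finset.sum_congr rfl fun m (_ : m ∈ Finset.univ) => h1 m]
    simp [ric]
  have sokTTG : ∀ i, sok R e (TT i i) G = - ric R f (f i) (f i) := by
    intro i
    rw [hG, sok_sum_right]
    have h1 : ∀ m, sok R e (TT i i) (TT m m) = - R (f i) (f m) (f i) (f m) := by
      intro m
      rw [sokTTv i i m m, hswap (f i) (f m) (f m) (f i),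
        hanti2 (f i) (f m) (f i) (f m)]
    rw [Finset.sum_congr rfl fun m (_ : m ∈ Finset.univ) => h1 m]
    simp [ric]
  have sokGG : sok R e G G = - scal R f := by
    rw [hG, sok_sum_left]
    have h1 : ∀ m, sok R e (TT m m) (∑ k, TT k k) = ∑ k, - R (f k) (f m) (f k) (f m) := by
      intro m
      rw [sok_sum_right]
      exact Finset.sum_congr rfl fun k _ => by
        rw [sokTTv m m k k, hanti2 (f k) (f m) (f k) (f m)]
    rw [Finset.sum_congr rfl fun m (_ : m ∈ Finset.univ) => h1 m]
    have h2 : (∑ m : Fin n, ∑ k : Fin n, -R (f k) (f m) (f k) (f m))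
        = - ∑ m : Fin n, ∑ k : Fin n, R (f k) (f m) (f k) (f m) := by simp
    rw [h2, Finset.sum_comm]
    simp [scal]
  have sokhdhd : ∀ i, sok R e (hdg i) (hdg i)
      = (2/(n:ℝ)) * ric R f (f i) (f i) - scal R f / (n:ℝ)^2 := by
    intro i
    rw [hhdg]
    rw [sok_add_left, sok_add_right, sok_add_right, sok_smul_left, sok_smul_right,
      sok_smul_left, sok_smul_right]
    rw [sokTTv i i i i, hzero (f i) (f i) (f i), sokTTG i, sokGTT i, sokGG]
    field_simp
    ring
  -- collapse helper
  have coll : ∀ (c : Fin n → Fin n → ℝ) (i0 j0 : Fin n),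
      (∑ a, ∑ b, c a b * ((if i0 = a then (1:ℝ) else 0) * (if j0 = b then 1 else 0)))
        = c i0 j0 := by
    intro c i0 j0
    have h1 : ∀ a b, c a b * ((if i0 = a then (1:ℝ) else 0) * (if j0 = b then 1 else 0))
        = if i0 = a then (if j0 = b then c a b else 0) else 0 := by
      intro a b; by_cases h : i0 = a <;> by_cases h' : j0 = b <;> simp [h, h']
    rw [Finset.sum_congr rfl fun a (_ : a ∈ Finset.univ) =>
      Finset.sum_congr rfl fun b (_ : b ∈ Finset.univ) => h1 a b]
    have h2 : ∀ a, (∑ b, if i0 = a then (if j0 = b then c a b else 0) else 0)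
        = if i0 = a then c a j0 else 0 := by
      intro a
      by_cases h : i0 = a
      · simp only [if_pos h]; rw [Finset.sum_ite_eq]; simp
      · simp [h]
    rw [Finset.sum_congr rfl fun a (_ : a ∈ Finset.univ) => h2 a, Finset.sum_ite_eq]
    simp
  -- the projection identity
  have lemP : ∀ i j k l : Fin n, (∑ β, Φ β k l * Φ β i j)
      = ((if i = k then (1:ℝ) else 0) * (if j = l then (1:ℝ) else 0)
          + (if i = l then (1:ℝ) else 0) * (if j = k then (1:ℝ) else 0))/2
        - (if i = j then (1:ℝ) else 0) * (if k = l then (1:ℝ) else 0)/(n:ℝ) := by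
    intro i j k l
    set PE : Fin n → Fin n → ℝ := fun a b =>
      ((if i = a then (1:ℝ) else 0) * (if j = b then (1:ℝ) else 0)
        + (if i = b then (1:ℝ) else 0) * (if j = a then (1:ℝ) else 0))/2
        - (if i = j then (1:ℝ) else 0) * (if a = b then (1:ℝ) else 0)/(n:ℝ) with hPE
    have hPEval : ∀ a b, PE a b =
        ((if i = a then (1:ℝ) else 0) * (if j = b then (1:ℝ) else 0)
          + (if i = b then (1:ℝ) else 0) * (if j = a then (1:ℝ) else 0))/2
          - (if i = j then (1:ℝ) else 0) * (if a = b then (1:ℝ) else 0)/(n:ℝ) := by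
      intro a b; rw [hPE]
    have hdelta : ∀ (u v : Fin n), (∑ a : Fin n,
        (if u = a then (1:ℝ) else 0) * (if v = a then (1:ℝ) else 0))
        = if u = v then (1:ℝ) else 0 := by
      intro u v
      have h1 : ∀ a, (if u = a then (1:ℝ) else 0) * (if v = a then (1:ℝ) else 0)
          = if u = a then (if v = a then (1:ℝ) else 0) else 0 := by
        intro a; by_cases h : u = a <;> simp [h]
      rw [Finset.sum_congr rfl fun a (_ : a ∈ Finset.univ) => h1 a, Finset.sum_ite_eq]
      by_cases h : u = v
      · simp [h]
      · have h' : ¬ v = u := fun hh => h hh.symm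
        simp [h, h']
    have hPEsym : IsSymTr PE := by
      constructor
      · intro a b
        rw [hPEval, hPEval]
        by_cases h : a = b
        · subst h; ring
        · rw [if_neg h, if_neg (Ne.symm h)]; ring
      · have h1 : ∀ a, PE a a
            = (if i = a then (1:ℝ) else 0) * (if j = a then (1:ℝ) else 0)
              - (if i = j then (1:ℝ) else 0) * (1:ℝ)/(n:ℝ) := by
          intro a; rw [hPEval]; simp
        rw [Finset.sum_congr rfl fun a (_ : a ∈ Finset.univ) => h1 a,
          Finset.sum_sub_distrib, hdelta i j, Finset.sum_const, Finset.card_univ,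
          Fintype.card_fin, nsmul_eq_mul]
        field_simp
        ring
    have hco : ∀ β, tip (Φ β) PE = Φ β i j := by
      intro β
      obtain ⟨hs, ht⟩ := hsymΦ β
      unfold tip
      have h1 : ∀ a b, Φ β a b * PE a b
          = (Φ β a b * ((if i = a then (1:ℝ) else 0) * (if j = b then 1 else 0)))/2
            + (Φ β a b * ((if j = a then (1:ℝ) else 0) * (if i = b then 1 else 0)))/2
            - (if i = j then (1:ℝ) else 0) * (if a = b then Φ β a b else 0)/(n:ℝ) := by
        intro a b
        rw [hPEval]
        have h2 : (if a = b then Φ β a b else 0)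
            = (if a = b then (1:ℝ) else 0) * Φ β a b := by
          by_cases h : a = b <;> simp [h]
        rw [h2]
        ring
      rw [Finset.sum_congr rfl fun a (_ : a ∈ Finset.univ) =>
        Finset.sum_congr rfl fun b (_ : b ∈ Finset.univ) => h1 a b]
      have e1 : (∑ a : Fin n, ∑ b : Fin n,
          ((Φ β a b * ((if i = a then (1:ℝ) else 0) * (if j = b then 1 else 0)))/2
            + (Φ β a b * ((if j = a then (1:ℝ) else 0) * (if i = b then 1 else 0)))/2
            - (if i = j then (1:ℝ) else 0) * (if a = b then Φ β a b else 0)/(n:ℝ)))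
          = (∑ a : Fin n, ∑ b : Fin n,
              Φ β a b * ((if i = a then (1:ℝ) else 0) * (if j = b then 1 else 0)))/2
            + (∑ a : Fin n, ∑ b : Fin n,
              Φ β a b * ((if j = a then (1:ℝ) else 0) * (if i = b then 1 else 0)))/2
            - (∑ a : Fin n, ∑ b : Fin n,
              (if i = j then (1:ℝ) else 0) * (if a = b then Φ β a b else 0))/(n:ℝ) := by
        simp only [Finset.sum_add_distrib, Finset.sum_sub_distrib, Finset.sum_div]
      rw [e1]
      rw [coll (fun a b => Φ β a b) i j]
      rw [coll (fun a b => Φ β a b) j i]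
      have e2 : (∑ a : Fin n, ∑ b : Fin n,
          (if i = j then (1:ℝ) else 0) * (if a = b then Φ β a b else 0)) = 0 := by
        have h4 : ∀ a : Fin n, (∑ b, (if i = j then (1:ℝ) else 0) * (if a = b then Φ β a b else 0))
            = (if i = j then (1:ℝ) else 0) * Φ β a a := by
          intro a
          rw [← Finset.mul_sum, Finset.sum_ite_eq]
          simp
        rw [Finset.sum_congr rfl fun a (_ : a ∈ Finset.univ) => h4 a, ← Finset.mul_sum, ht,
          mul_zero]
      rw [e2, hs j i]
      ring
    have h4 : PE k l = ∑ β, Φ β i j * Φ β k l := by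
      conv_lhs => rw [hexp PE hPEsym]
      rw [Finset.sum_apply]
      rw [Finset.sum_apply]
      exact Finset.sum_congr rfl fun β _ => by
        rw [Pi.smul_apply, Pi.smul_apply, smul_eq_mul, hco β]
    rw [show (∑ β, Φ β k l * Φ β i j) = ∑ β, Φ β i j * Φ β k l from
      Finset.sum_congr rfl fun β _ => mul_comm _ _, ← h4, hPEval]
  -- trace identity
  have hlamval : ∀ β, lam β = sok R e (Φ β) (Φ β) := by
    intro β
    rw [heig β (Φ β) (hsymΦ β), horth β β]
    simp
  have htrace : (∑ β, lam β) = scal R e / 2 + scal R e / (n:ℝ) := by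
    rw [Finset.sum_congr rfl fun β (_ : β ∈ Finset.univ) => hlamval β]
    simp only [sok]
    rw [Finset.sum_comm]
    rw [Finset.sum_congr rfl fun i (_ : i ∈ Finset.univ) => Finset.sum_comm]
    rw [Finset.sum_congr rfl fun i (_ : i ∈ Finset.univ) =>
      Finset.sum_congr rfl fun j (_ : j ∈ Finset.univ) => Finset.sum_comm]
    rw [Finset.sum_congr rfl fun i (_ : i ∈ Finset.univ) =>
      Finset.sum_congr rfl fun j (_ : j ∈ Finset.univ) =>
      Finset.sum_congr rfl fun k (_ : k ∈ Finset.univ) => Finset.sum_comm]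
    have h1 : ∀ i j k l : Fin n,
        (∑ β, R (e i) (e k) (e l) (e j) * Φ β k l * Φ β i j)
        = (R (e i) (e k) (e l) (e j) * ((if i = k then (1:ℝ) else 0) * (if j = l then 1 else 0)))/2
          + (R (e i) (e k) (e l) (e j) * ((if j = k then (1:ℝ) else 0) * (if i = l then 1 else 0)))/2
          - (if i = j then (1:ℝ) else 0) * (if k = l then R (e i) (e k) (e l) (e j) else 0)/(n:ℝ) := by
      intro i j k l
      have h2 : (∑ β, R (e i) (e k) (e l) (e j) * Φ β k l * Φ β i j)
          = R (e i) (e k) (e l) (e j) * (∑ β, Φ β k l * Φ β i j) := by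
        rw [Finset.mul_sum]
        exact Finset.sum_congr rfl fun β _ => by ring
      have h3 : (if k = l then R (e i) (e k) (e l) (e j) else 0)
          = (if k = l then (1:ℝ) else 0) * R (e i) (e k) (e l) (e j) := by
        by_cases h : k = l <;> simp [h]
      rw [h2, lemP i j k l, h3]
      ring
    rw [Finset.sum_congr rfl fun i (_ : i ∈ Finset.univ) =>
      Finset.sum_congr rfl fun j (_ : j ∈ Finset.univ) =>
      Finset.sum_congr rfl fun k (_ : k ∈ Finset.univ) =>
      Finset.sum_congr rfl fun l (_ : l ∈ Finset.univ) => h1 i j k l]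
    simp only [Finset.sum_add_distrib, Finset.sum_sub_distrib, ← Finset.sum_div]
    have hA : (∑ i : Fin n, ∑ j : Fin n, ∑ k : Fin n, ∑ l : Fin n,
        R (e i) (e k) (e l) (e j) * ((if i = k then (1:ℝ) else 0) * (if j = l then 1 else 0)))
        = 0 := by
      have h3 : ∀ i j : Fin n, (∑ k : Fin n, ∑ l : Fin n,
          R (e i) (e k) (e l) (e j) * ((if i = k then (1:ℝ) else 0) * (if j = l then 1 else 0)))
          = R (e i) (e i) (e j) (e j) :=
        fun i j => coll (fun k l => R (e i) (e k) (e l) (e j)) i j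
      rw [Finset.sum_congr rfl fun i (_ : i ∈ Finset.univ) =>
        Finset.sum_congr rfl fun j (_ : j ∈ Finset.univ) => h3 i j]
      simp [hzero]
    have hB : (∑ i : Fin n, ∑ j : Fin n, ∑ k : Fin n, ∑ l : Fin n,
        R (e i) (e k) (e l) (e j) * ((if j = k then (1:ℝ) else 0) * (if i = l then 1 else 0)))
        = scal R e := by
      have h3 : ∀ i j : Fin n, (∑ k : Fin n, ∑ l : Fin n,
          R (e i) (e k) (e l) (e j) * ((if j = k then (1:ℝ) else 0) * (if i = l then 1 else 0)))
          = R (e i) (e j) (e i) (e j) :=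
        fun i j => coll (fun k l => R (e i) (e k) (e l) (e j)) j i
      rw [Finset.sum_congr rfl fun i (_ : i ∈ Finset.univ) =>
        Finset.sum_congr rfl fun j (_ : j ∈ Finset.univ) => h3 i j]
      rfl
    have hCzz : (∑ i : Fin n, ∑ j : Fin n, ∑ k : Fin n, ∑ l : Fin n,
        (if i = j then (1:ℝ) else 0) * (if k = l then R (e i) (e k) (e l) (e j) else 0))
        = - scal R e := by
      have h3 : ∀ i j k : Fin n, (∑ l : Fin n,
          (if i = j then (1:ℝ) else 0) * (if k = l then R (e i) (e k) (e l) (e j) else 0))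
          = (if i = j then (1:ℝ) else 0) * R (e i) (e k) (e k) (e j) := by
        intro i j k
        rw [← Finset.mul_sum, Finset.sum_ite_eq]
        simp
      rw [Finset.sum_congr rfl fun i (_ : i ∈ Finset.univ) =>
        Finset.sum_congr rfl fun j (_ : j ∈ Finset.univ) =>
        Finset.sum_congr rfl fun k (_ : k ∈ Finset.univ) => h3 i j k]
      have h4 : ∀ i j : Fin n, (∑ k : Fin n,
          (if i = j then (1:ℝ) else 0) * R (e i) (e k) (e k) (e j))
          = if i = j then (∑ k : Fin n, R (e i) (e k) (e k) (e j)) else 0 := by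
        intro i j
        rw [← Finset.mul_sum]
        by_cases h : i = j <;> simp [h]
      rw [Finset.sum_congr rfl fun i (_ : i ∈ Finset.univ) =>
        Finset.sum_congr rfl fun j (_ : j ∈ Finset.univ) => h4 i j]
      rw [Finset.sum_congr rfl fun i (_ : i ∈ Finset.univ) => Finset.sum_ite_eq Finset.univ i
        (fun j => ∑ k : Fin n, R (e i) (e k) (e k) (e j))]
      simp only [Finset.mem_univ, if_true]
      have h5 : ∀ i : Fin n, (∑ k : Fin n, R (e i) (e k) (e k) (e i))
          = ∑ k : Fin n, - R (e i) (e k) (e i) (e k) :=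
        fun i => Finset.sum_congr rfl fun k _ => hanti2 (e i) (e k) (e i) (e k)
      rw [Finset.sum_congr rfl fun i (_ : i ∈ Finset.univ) => h5 i]
      simp [scal]
    rw [hA, hB, hCzz]
    ring
  -- scalar curvature basis independence
  have hSf : scal R f = scal R e := by
    set Ge : Fin n → Fin n → ℝ := ∑ m, Tc e (e m) (e m) with hGe
    have hGed : ∀ k l, Ge k l = if k = l then (1:ℝ) else 0 := by
      intro k l
      have h2 : Ge k l = ∑ m, ⟪e m, e k⟫ * ⟪e m, e l⟫ := by
        rw [hGe]; simp [StmtAux.Tc, Finset.sum_apply]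
      rw [h2]
      by_cases h : k = l
      · subst h
        have h3 : ∀ m, ⟪e m, e k⟫ * ⟪e m, e k⟫ = if m = k then (1:ℝ) else 0 := by
          intro m; rw [heo]; by_cases hm : m = k <;> simp [hm]
        rw [Finset.sum_congr rfl fun m (_ : m ∈ Finset.univ) => h3 m]
        simp
      · have h3 : ∀ m, ⟪e m, e k⟫ * ⟪e m, e l⟫ = 0 := by
          intro m
          rw [heo, heo]
          by_cases h1 : m = k
          · subst h1
            rw [if_neg h]
            ring
          · rw [if_neg h1]
            ring
        rw [Finset.sum_congr rfl fun m (_ : m ∈ Finset.univ) => h3 m]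
        simp [h]
    have hGG : G = Ge := funext fun k => funext fun l => by rw [hGdiag, hGed]
    have h4 : sok R e Ge Ge = - scal R e := by
      rw [hGe, sok_sum_left]
      have h5 : ∀ m, sok R e (Tc e (e m) (e m)) (∑ k, Tc e (e k) (e k))
          = ∑ k, - R (e k) (e m) (e k) (e m) := by
        intro m
        rw [sok_sum_right]
        exact Finset.sum_congr rfl fun k _ => by
          rw [sokTc (e m) (e m) (e k) (e k), hanti2 (e k) (e m) (e k) (e m)]
      rw [Finset.sum_congr rfl fun m (_ : m ∈ Finset.univ) => h5 m]
      have h6 : (∑ m : Fin n, ∑ k : Fin n, -R (e k) (e m) (e k) (e m))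
          = - ∑ m : Fin n, ∑ k : Fin n, R (e k) (e m) (e k) (e m) := by simp
      rw [h6, Finset.sum_comm]
      simp [scal]
    have h7 := sokGG
    rw [hGG, h4] at h7
    linarith
  -- constants
  set Dd : ℝ := (n:ℝ) - (p:ℝ) + 2 with hDd
  have hDpos : 0 < Dd := by rw [hDd]; linarith
  have hDne : Dd ≠ 0 := ne_of_gt hDpos
  set uu : ℝ := ((n:ℝ) - (p:ℝ))/Dd with huu
  set ss : ℝ := (n:ℝ)/Dd with hss
  set Cc : ℝ := 2*((n:ℝ) - (p:ℝ) + 1)/Dd with hCc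
  have hu0 : 0 ≤ uu := by rw [huu]; apply div_nonneg <;> linarith
  have hs0 : 0 ≤ ss := by rw [hss]; apply div_nonneg <;> linarith
  have hCpos : 0 < Cc := by rw [hCc]; apply div_pos <;> linarith
  have h2uC : 2*uu ≤ Cc := by
    rw [huu, hCc]
    rw [show 2*(((n:ℝ) - (p:ℝ))/Dd) = (2*((n:ℝ) - (p:ℝ)))/Dd from by ring]
    exact (div_le_div_iff_of_pos_right hDpos).mpr (by linarith)
  have hsC : ss ≤ Cc := by
    rw [hss, hCc]
    exact (div_le_div_iff_of_pos_right hDpos).mpr (by linarith)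
  -- component Parseval in the f-frame
  have hxpar : ∀ ψ : Fin n → Fin n → ℝ,
      (∑ q : Fin n × Fin n, (tip (TT q.1 q.2) ψ)^2) = tip ψ ψ := by
    intro ψ
    have ha : ∀ k l : Fin n, (∑ i, ⟪f i, e k⟫ * ⟪f i, e l⟫) = if k = l then (1:ℝ) else 0 := by
      intro k l
      rw [← hGdiag k l, hG]
      simp [hTT, StmtAux.Tc, Finset.sum_apply]
    have h2 := StmtAux.sq_sum_transform (fun i k => ⟪f i, e k⟫) ψ ha
    rw [Fintype.sum_prod_type]
    have h3 : ∀ i j : Fin n, tip (TT i j) ψ = ∑ k, ∑ l, ⟪f i, e k⟫ * ⟪f j, e l⟫ * ψ k l := by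
      intro i j
      unfold tip
      exact Finset.sum_congr rfl fun k _ => Finset.sum_congr rfl fun l _ => by
        rw [hTTval]
    rw [Finset.sum_congr rfl fun i (_ : i ∈ Finset.univ) =>
      Finset.sum_congr rfl fun j (_ : j ∈ Finset.univ) => by rw [h3 i j]]
    rw [h2]
    unfold tip
    exact Finset.sum_congr rfl fun k _ => Finset.sum_congr rfl fun l _ => pow_two (ψ k l)
  -- weights
  set χp : Fin n → ℝ := fun i => if (i:ℕ) < p then (1:ℝ) else 0 with hχp
  have hχsum : (∑ i, χp i) = (p:ℝ) := by
    rw [hχp]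
    exact StmtAux.sum_ind hpln
  have hχ0 : ∀ i, 0 ≤ χp i := by
    intro i; rw [hχp]; dsimp only; split <;> norm_num
  have hχ1 : ∀ i, χp i ≤ 1 := by
    intro i; rw [hχp]; dsimp only; split <;> norm_num
  set dco : Fin n × Fin n → ℝ :=
    fun q => (if q.1 = q.2 then 0 else 1) * uu * (χp q.1 + χp q.2) with hdco
  have hdco0 : ∀ q, 0 ≤ dco q := by
    intro q; rw [hdco]; dsimp only
    refine mul_nonneg (mul_nonneg ?_ hu0) (add_nonneg (hχ0 _) (hχ0 _))
    split <;> norm_num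
  have hdcodiag : ∀ i : Fin n, dco (i, i) = 0 := by
    intro i; rw [hdco]; simp
  set w : Fin N → ℝ := fun β =>
    (1/4) * (∑ q : Fin n × Fin n, dco q * (tip (O q.1 q.2) (Φ β))^2)
      + ss * ∑ i : Fin n, (if (i:ℕ) < p then (tip (hdg i) (Φ β))^2 else 0) with hwdef
  have hw0 : ∀ β, 0 ≤ w β := by
    intro β; rw [hwdef]; dsimp only
    have t1 : 0 ≤ ∑ q : Fin n × Fin n, dco q * (tip (O q.1 q.2) (Φ β))^2 :=
      Finset.sum_nonneg fun q _ => mul_nonneg (hdco0 q) (sq_nonneg _)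
    have t2 : 0 ≤ ∑ i : Fin n, (if (i:ℕ) < p then (tip (hdg i) (Φ β))^2 else 0) :=
      Finset.sum_nonneg fun i _ => by split
                                      · exact sq_nonneg _
                                      · exact le_refl 0
    nlinarith [mul_nonneg hs0 t2]
  have hwform : ∀ β, w β = ∑ q : Fin n × Fin n,
      (dco q + (if q.1 = q.2 ∧ (q.1:ℕ) < p then ss else 0)) * (tip (TT q.1 q.2) (Φ β))^2 := by
    intro β
    have hsymβ := (hsymΦ β).1
    have htrβ := (hsymΦ β).2
    have e1 : (1/4) * (∑ q : Fin n × Fin n, dco q * (tip (O q.1 q.2) (Φ β))^2)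
        = ∑ q : Fin n × Fin n, dco q * (tip (TT q.1 q.2) (Φ β))^2 := by
      rw [Finset.mul_sum]
      refine Finset.sum_congr rfl fun q _ => ?_
      rw [tipOψ q.1 q.2 (Φ β) hsymβ]
      ring
    have e2 : ss * (∑ i : Fin n, (if (i:ℕ) < p then (tip (hdg i) (Φ β))^2 else 0))
        = ∑ q : Fin n × Fin n,
          (if q.1 = q.2 ∧ (q.1:ℕ) < p then ss else 0) * (tip (TT q.1 q.2) (Φ β))^2 := by
      rw [Fintype.sum_prod_type]
      have e3 : ∀ i : Fin n, (∑ j : Fin n,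
          (if i = j ∧ (i:ℕ) < p then ss else 0) * (tip (TT i j) (Φ β))^2)
          = (if (i:ℕ) < p then ss * (tip (TT i i) (Φ β))^2 else 0) := by
        intro i
        have e4 : ∀ j, (if i = j ∧ (i:ℕ) < p then ss else 0) * (tip (TT i j) (Φ β))^2
            = if i = j then (if (i:ℕ) < p then ss * (tip (TT i j) (Φ β))^2 else 0) else 0 := by
          intro j
          by_cases h1 : i = j <;> by_cases h2 : (i:ℕ) < p <;> simp [h1, h2]
        rw [Finset.sum_congr rfl fun j (_ : j ∈ Finset.univ) => e4 j, Finset.sum_ite_eq]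
        simp
      rw [Finset.sum_congr rfl fun i (_ : i ∈ Finset.univ) => e3 i, Finset.mul_sum]
      refine Finset.sum_congr rfl fun i _ => ?_
      by_cases h2 : (i:ℕ) < p
      · simp only [if_pos h2]
        rw [tiphdψ i (Φ β) htrβ]
      · simp [h2]
    rw [hwdef]; dsimp only
    rw [e1, e2, ← Finset.sum_add_distrib]
    exact Finset.sum_congr rfl fun q _ => by ring
  have hwC : ∀ β, w β ≤ Cc := by
    intro β
    rw [hwform β]
    have hcle : ∀ q : Fin n × Fin n,
        dco q + (if q.1 = q.2 ∧ (q.1:ℕ) < p then ss else 0) ≤ Cc := by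
      intro q
      rw [hdco]; dsimp only
      by_cases h1 : q.1 = q.2
      · rw [if_pos h1]
        by_cases h2 : (q.1:ℕ) < p
        · rw [if_pos ⟨h1, h2⟩]
          simp only [zero_mul, zero_add]
          exact hsC
        · rw [if_neg (fun hc => h2 hc.2)]
          simp only [zero_mul, zero_add]
          linarith [hCpos]
      · rw [if_neg h1, if_neg (fun hc => h1 hc.1)]
        simp only [one_mul, add_zero]
        nlinarith [hχ0 q.1, hχ0 q.2, hχ1 q.1, hχ1 q.2, hu0, h2uC]
    calc (∑ q : Fin n × Fin n,
          (dco q + (if q.1 = q.2 ∧ (q.1:ℕ) < p then ss else 0)) * (tip (TT q.1 q.2) (Φ β))^2)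
        ≤ ∑ q : Fin n × Fin n, Cc * (tip (TT q.1 q.2) (Φ β))^2 :=
          Finset.sum_le_sum fun q _ => mul_le_mul_of_nonneg_right (hcle q) (sq_nonneg _)
      _ = Cc * ∑ q : Fin n × Fin n, (tip (TT q.1 q.2) (Φ β))^2 := by rw [Finset.mul_sum]
      _ = Cc * tip (Φ β) (Φ β) := by rw [hxpar (Φ β)]
      _ = Cc := by rw [horth β β]; simp
  -- total weight
  have hsumdco : (∑ q : Fin n × Fin n, dco q) = uu * (2*(p:ℝ)*((n:ℝ)-1)) := by
    rw [Fintype.sum_prod_type]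
    have e5 : ∀ i j : Fin n, dco (i, j)
        = uu * ((if i = j then 0 else χp i) + (if i = j then 0 else χp j)) := by
      intro i j
      rw [hdco]; dsimp only
      by_cases h : i = j <;> simp [h] <;> ring
    have S1 : ∀ i : Fin n, (∑ j : Fin n, (if i = j then (0:ℝ) else χp i))
        = χp i * ((n:ℝ)-1) := by
      intro i
      have h6 : ∀ j, (if i = j then (0:ℝ) else χp i) = χp i - (if i = j then χp i else 0) := by
        intro j; by_cases h : i = j <;> simp [h]
      rw [Finset.sum_congr rfl fun j (_ : j ∈ Finset.univ) => h6 j, Finset.sum_sub_distrib,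
        Finset.sum_const, Finset.sum_ite_eq]
      simp [Finset.card_univ]
      ring
    have S2 : ∀ i : Fin n, (∑ j : Fin n, (if i = j then (0:ℝ) else χp j)) = (p:ℝ) - χp i := by
      intro i
      have h6 : ∀ j, (if i = j then (0:ℝ) else χp j) = χp j - (if i = j then χp j else 0) := by
        intro j; by_cases h : i = j <;> simp [h]
      rw [Finset.sum_congr rfl fun j (_ : j ∈ Finset.univ) => h6 j, Finset.sum_sub_distrib,
        hχsum, Finset.sum_ite_eq]
      simp
    have e7 : ∀ i : Fin n, (∑ j : Fin n, dco (i, j))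
        = uu * (χp i * ((n:ℝ)-1) + ((p:ℝ) - χp i)) := by
      intro i
      rw [Finset.sum_congr rfl fun j (_ : j ∈ Finset.univ) => e5 i j, ← Finset.mul_sum,
        Finset.sum_add_distrib, S1 i, S2 i]
    rw [Finset.sum_congr rfl fun i (_ : i ∈ Finset.univ) => e7 i, ← Finset.mul_sum]
    congr 1
    rw [Finset.sum_add_distrib, Finset.sum_sub_distrib, Finset.sum_const,
      ← Finset.sum_mul, hχsum]
    simp [Finset.card_univ]
    ring
  have hsumw : (∑ β, w β) = Cc * (((n:ℝ) - 1) * (p:ℝ) / 2) := by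
    have e1 : (∑ β, w β)
        = (1/4) * (∑ q : Fin n × Fin n, dco q * (∑ β, (tip (O q.1 q.2) (Φ β))^2))
          + ss * ∑ i : Fin n, (if (i:ℕ) < p then (∑ β, (tip (hdg i) (Φ β))^2) else 0) := by
      rw [Finset.sum_congr rfl fun β (_ : β ∈ Finset.univ) => by rw [hwdef]]
      rw [Finset.sum_add_distrib]
      congr 1
      · rw [← Finset.mul_sum]
        congr 1
        rw [Finset.sum_comm]
        exact Finset.sum_congr rfl fun q _ => by rw [← Finset.mul_sum]
      · rw [← Finset.mul_sum]
        congr 1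
        rw [Finset.sum_comm]
        refine Finset.sum_congr rfl fun i _ => ?_
        by_cases h : (i:ℕ) < p <;> simp [h]
    rw [e1]
    have e2 : ∀ q : Fin n × Fin n, dco q * (∑ β, (tip (O q.1 q.2) (Φ β))^2) = dco q * 2 := by
      intro q
      by_cases h1 : q.1 = q.2
      · have hz : dco q = 0 := by rw [hdco]; dsimp only; rw [if_pos h1]; ring
        rw [hz, zero_mul, zero_mul]
      · congr 1
        rw [Finset.sum_congr rfl fun β (_ : β ∈ Finset.univ) => by rw [tip_comm]]
        rw [parsevalW _ (hOsymtr q.1 q.2 h1), tipOO q.1 q.2 h1]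
    rw [Finset.sum_congr rfl fun q (_ : q ∈ Finset.univ) => e2 q]
    have e3 : ∀ i : Fin n, (if (i:ℕ) < p then (∑ β, (tip (hdg i) (Φ β))^2) else 0)
        = (if (i:ℕ) < p then (1 - 1/(n:ℝ)) else 0) := by
      intro i
      by_cases h : (i:ℕ) < p
      · rw [if_pos h, if_pos h]
        rw [Finset.sum_congr rfl fun β (_ : β ∈ Finset.univ) => by rw [tip_comm]]
        rw [parsevalW _ (hhdsymtr i), tiphdhd i]
      · rw [if_neg h, if_neg h]
    rw [Finset.sum_congr rfl fun i (_ : i ∈ Finset.univ) => e3 i]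
    have e6 : (∑ i : Fin n, (if (i:ℕ) < p then (1 - 1/(n:ℝ)) else 0))
        = (p:ℝ)*(1-1/(n:ℝ)) := by
      have h7 : ∀ i : Fin n, (if (i:ℕ) < p then (1 - 1/(n:ℝ)) else 0)
          = (1-1/(n:ℝ)) * χp i := by
        intro i; rw [hχp]; dsimp only; by_cases h : (i:ℕ) < p <;> simp [h]
      rw [Finset.sum_congr rfl fun i (_ : i ∈ Finset.univ) => h7 i, ← Finset.mul_sum, hχsum]
      ring
    rw [e6]
    have e8 : (∑ q : Fin n × Fin n, dco q * 2) = (∑ q : Fin n × Fin n, dco q) * 2 :=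
      by rw [Finset.sum_mul]
    rw [e8, hsumdco, huu, hss, hCc]
    field_simp
    ring
  -- weighted eigenvalue sum
  have hsumwl : (∑ β, w β * lam β)
      = (∑ i : Fin n, if (i:ℕ) < p then ric R f (f i) (f i) else 0)
        - ((p:ℝ)/((n:ℝ)*Dd)) * scal R f := by
    have e1 : (∑ β, w β * lam β)
        = (1/4) * (∑ q : Fin n × Fin n, dco q * (∑ β, lam β * (tip (O q.1 q.2) (Φ β))^2))
          + ss * ∑ i : Fin n,
            (if (i:ℕ) < p then (∑ β, lam β * (tip (hdg i) (Φ β))^2) else 0) := by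
      have h8 : ∀ β, w β * lam β
          = (1/4) * (∑ q : Fin n × Fin n, dco q * (lam β * (tip (O q.1 q.2) (Φ β))^2))
            + ss * ∑ i : Fin n,
              (if (i:ℕ) < p then lam β * (tip (hdg i) (Φ β))^2 else 0) := by
        intro β
        rw [hwdef]; dsimp only
        rw [add_mul, mul_assoc, Finset.sum_mul, mul_assoc, Finset.sum_mul]
        congr 1
        · congr 1
          exact Finset.sum_congr rfl fun q _ => by ring
        · congr 1
          refine Finset.sum_congr rfl fun i _ => ?_
          by_cases h : (i:ℕ) < p <;> simp [h] <;> ring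
      rw [Finset.sum_congr rfl fun β (_ : β ∈ Finset.univ) => h8 β, Finset.sum_add_distrib]
      congr 1
      · rw [← Finset.mul_sum]
        congr 1
        rw [Finset.sum_comm]
        exact Finset.sum_congr rfl fun q _ => by rw [← Finset.mul_sum]
      · rw [← Finset.mul_sum]
        congr 1
        rw [Finset.sum_comm]
        refine Finset.sum_congr rfl fun i _ => ?_
        by_cases h : (i:ℕ) < p <;> simp [h]
    rw [e1]
    have e2 : ∀ q : Fin n × Fin n, dco q * (∑ β, lam β * (tip (O q.1 q.2) (Φ β))^2)
        = dco q * (2 * R (f q.1) (f q.2) (f q.1) (f q.2)) := by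
      intro q
      by_cases h1 : q.1 = q.2
      · have hz : dco q = 0 := by rw [hdco]; dsimp only; rw [if_pos h1]; ring
        rw [hz, zero_mul, zero_mul]
      · congr 1
        rw [Finset.sum_congr rfl fun β (_ : β ∈ Finset.univ) => by rw [tip_comm]]
        rw [eigsum _ (hOsymtr q.1 q.2 h1), sokOO q.1 q.2]
    rw [Finset.sum_congr rfl fun q (_ : q ∈ Finset.univ) => e2 q]
    have e3 : ∀ i : Fin n, (if (i:ℕ) < p then (∑ β, lam β * (tip (hdg i) (Φ β))^2) else 0)
        = (if (i:ℕ) < p then ((2/(n:ℝ)) * ric R f (f i) (f i) - scal R f/(n:ℝ)^2) else 0) := by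
      intro i
      by_cases h : (i:ℕ) < p
      · rw [if_pos h, if_pos h]
        rw [Finset.sum_congr rfl fun β (_ : β ∈ Finset.univ) => by rw [tip_comm]]
        rw [eigsum _ (hhdsymtr i), sokhdhd i]
      · rw [if_neg h, if_neg h]
    rw [Finset.sum_congr rfl fun i (_ : i ∈ Finset.univ) => e3 i]
    have e4 : (∑ q : Fin n × Fin n, dco q * (2 * R (f q.1) (f q.2) (f q.1) (f q.2)))
        = 2 * uu * (2 * (∑ i : Fin n, if (i:ℕ) < p then ric R f (f i) (f i) else 0)) := by
      rw [Fintype.sum_prod_type]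
      have e5 : ∀ i j : Fin n, dco (i, j) * (2 * R (f i) (f j) (f i) (f j))
          = 2*uu*((if i = j then 0 else χp i * R (f i) (f j) (f i) (f j))
            + (if i = j then 0 else χp j * R (f i) (f j) (f i) (f j))) := by
        intro i j
        rw [hdco]; dsimp only
        by_cases h : i = j <;> simp [h] <;> ring
      rw [Finset.sum_congr rfl fun i (_ : i ∈ Finset.univ) =>
        Finset.sum_congr rfl fun j (_ : j ∈ Finset.univ) => e5 i j]
      rw [Finset.sum_congr rfl fun i (_ : i ∈ Finset.univ) =>
        (Finset.mul_sum Finset.univ (fun j => ((if i = j then 0 else χp i * R (f i) (f j) (f i) (f j))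
          + (if i = j then 0 else χp j * R (f i) (f j) (f i) (f j)))) (2*uu)).symm]
      rw [← Finset.mul_sum]
      congr 1
      have T1 : (∑ i : Fin n, ∑ j : Fin n,
          (if i = j then (0:ℝ) else χp i * R (f i) (f j) (f i) (f j)))
          = ∑ i : Fin n, (if (i:ℕ) < p then ric R f (f i) (f i) else 0) := by
        have h9 : ∀ i j, (if i = j then (0:ℝ) else χp i * R (f i) (f j) (f i) (f j))
            = χp i * R (f i) (f j) (f i) (f j)
              - (if i = j then χp i * R (f i) (f j) (f i) (f j) else 0) := by
          intro i j; by_cases h : i = j <;> simp [h]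
        rw [Finset.sum_congr rfl fun i (_ : i ∈ Finset.univ) =>
          Finset.sum_congr rfl fun j (_ : j ∈ Finset.univ) => h9 i j]
        refine Finset.sum_congr rfl fun i _ => ?_
        rw [Finset.sum_sub_distrib, ← Finset.mul_sum, Finset.sum_ite_eq]
        simp only [Finset.mem_univ, if_true]
        rw [hzero (f i) (f i) (f i)]
        rw [hχp]; dsimp only
        by_cases h : (i:ℕ) < p <;> simp [h, ric]
      have T2 : (∑ i : Fin n, ∑ j : Fin n,
          (if i = j then (0:ℝ) else χp j * R (f i) (f j) (f i) (f j)))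
          = ∑ i : Fin n, (if (i:ℕ) < p then ric R f (f i) (f i) else 0) := by
        rw [Finset.sum_comm]
        have h9 : ∀ j i, (if i = j then (0:ℝ) else χp j * R (f i) (f j) (f i) (f j))
            = χp j * R (f j) (f i) (f j) (f i)
              - (if j = i then χp j * R (f j) (f i) (f j) (f i) else 0) := by
          intro j i
          rw [hswap (f j) (f i) (f j) (f i)]
          by_cases h : i = j
          · rw [if_pos h, if_pos h.symm]; ring
          · rw [if_neg h, if_neg (Ne.symm h)]; ring
        rw [Finset.sum_congr rfl fun j (_ : j ∈ Finset.univ) =>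
          Finset.sum_congr rfl fun i (_ : i ∈ Finset.univ) => h9 j i]
        refine Finset.sum_congr rfl fun j _ => ?_
        rw [Finset.sum_sub_distrib, ← Finset.mul_sum, Finset.sum_ite_eq]
        simp only [Finset.mem_univ, if_true]
        rw [hzero (f j) (f j) (f j)]
        rw [hχp]; dsimp only
        by_cases h : (j:ℕ) < p <;> simp [h, ric]
      rw [Finset.sum_congr rfl fun i (_ : i ∈ Finset.univ) => Finset.sum_add_distrib,
        Finset.sum_add_distrib, T1, T2]
      ring
    rw [e4]
    have e10 : (∑ i : Fin n,
        (if (i:ℕ) < p then ((2/(n:ℝ)) * ric R f (f i) (f i) - scal R f/(n:ℝ)^2) else 0))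
        = (2/(n:ℝ)) * (∑ i : Fin n, if (i:ℕ) < p then ric R f (f i) (f i) else 0)
          - (p:ℝ) * scal R f/(n:ℝ)^2 := by
      have h11 : ∀ i : Fin n,
          (if (i:ℕ) < p then ((2/(n:ℝ)) * ric R f (f i) (f i) - scal R f/(n:ℝ)^2) else 0)
          = (2/(n:ℝ)) * (if (i:ℕ) < p then ric R f (f i) (f i) else 0)
            - χp i * scal R f/(n:ℝ)^2 := by
        intro i; rw [hχp]; dsimp only
        by_cases h : (i:ℕ) < p <;> simp [h] <;> ring
      rw [Finset.sum_congr rfl fun i (_ : i ∈ Finset.univ) => h11 i, Finset.sum_sub_distrib,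
        ← Finset.mul_sum]
      congr 1
      have h12 : ∀ i : Fin n, χp i * scal R f/(n:ℝ)^2 = χp i * (scal R f/(n:ℝ)^2) := by
        intro i; ring
      rw [Finset.sum_congr rfl fun i (_ : i ∈ Finset.univ) => h12 i, ← Finset.sum_mul, hχsum]
      ring
    rw [e10]
    rw [huu, hss, hDd]
    have hDne' : (n:ℝ) - (p:ℝ) + 2 ≠ 0 := by linarith
    field_simp
    ring
  -- trace normalization
  have hNR : 2*(N:ℝ) = ((n:ℝ) - 1)*((n:ℝ) + 2) := by
    have h1 := congrArg (Nat.cast : ℕ → ℝ) hN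
    push_cast [Nat.cast_sub hn1] at h1
    linarith
  have hNpos : (0:ℝ) < (N:ℝ) := by nlinarith
  have hSlam : scal R f = (n:ℝ)*((n:ℝ)-1)*lamBar lam := by
    rw [hSf]
    have h1 : lamBar lam = (∑ β, lam β)/(N:ℝ) := rfl
    have h2 : (∑ β, lam β) = scal R e / 2 + scal R e / (n:ℝ) := htrace
    rw [h1, h2]
    field_simp
    linear_combination (scal R e) * hNR
  -- cone condition and bathtub
  have hαpos : 0 < ((n:ℝ) - 1) * (p:ℝ) / 2 := by
    have : (0:ℝ) < (n:ℝ) - 1 := by linarith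
    have hp0 : (0:ℝ) < (p:ℝ) := by linarith
    positivity
  have hαN : ((n:ℝ) - 1) * (p:ℝ) / 2 < (N:ℝ) := by
    have h1 : (p:ℝ) < (n:ℝ)+2 := by linarith
    have h2 : (0:ℝ) < (n:ℝ)-1 := by linarith
    nlinarith [hNR]
  have hbath := StmtAux.bathtub lam hmono w Cc (((n:ℝ) - 1) * (p:ℝ) / 2) hCpos hw0 hwC
    hsumw hαN
  have hcone : -θ * lamBar lam
      ≤ (((n:ℝ) - 1) * (p:ℝ) / 2)⁻¹ * psum lam (((n:ℝ) - 1) * (p:ℝ) / 2) := hC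
  have hpsum : (((n:ℝ) - 1) * (p:ℝ) / 2) * (-θ * lamBar lam)
      ≤ psum lam (((n:ℝ) - 1) * (p:ℝ) / 2) := by
    have h2 := mul_le_mul_of_nonneg_left hcone (le_of_lt hαpos)
    calc (((n:ℝ) - 1) * (p:ℝ) / 2) * (-θ * lamBar lam)
        ≤ (((n:ℝ) - 1) * (p:ℝ) / 2) * ((((n:ℝ) - 1) * (p:ℝ) / 2)⁻¹
            * psum lam (((n:ℝ) - 1) * (p:ℝ) / 2)) := h2
      _ = psum lam (((n:ℝ) - 1) * (p:ℝ) / 2) := by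
          rw [← mul_assoc, mul_inv_cancel₀ (ne_of_gt hαpos), one_mul]
  have h3 := mul_le_mul_of_nonneg_left hpsum (le_of_lt hCpos)
  rw [hsumwl, hSlam] at hbath
  have hkey : ((n:ℝ)-1)*(p:ℝ)/Dd*(1 - ((n:ℝ)-(p:ℝ)+1)*θ)*lamBar lam
      = Cc*((((n:ℝ)-1)*(p:ℝ)/2)*(-θ*lamBar lam))
        + ((p:ℝ)/((n:ℝ)*Dd))*((n:ℝ)*((n:ℝ)-1)*lamBar lam) := by
    rw [hCc]
    field_simp
    ring
  rw [hkey]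
  linarith
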